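/- Let d ≥ 1 be an integer and R > 0. There exists a constant C = C(d, R) < ∞ such that for every bounded open set U ⊂ ℝ^d with diameter at most R, every ε ∈ (0,1), and every function h : εℤ^d → ℝ with h(x) = 0 for all x ∈ εℤ^d \ U, one has ε^d · Σ_{x ∈ εℤ^d} h(x)² ≤ C · (ε^{2d} / κ_ε) · Σ_{x ∈ εℤ^d} Σ_{z ∈ εℤ^d \ {0}} |z|^{-(d+2)} (h(x+z) − h(x))². -/

import Mathlib

/-- The rescaled lattice point `ε·w ∈ εℤ^d ⊂ ℝ^d` (with the Euclidean norm). -/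
noncomputable def pt (d : ℕ) (ε : ℝ) (w : Fin d → ℤ) : EuclideanSpace ℝ (Fin d) :=
  (WithLp.equiv 2 (Fin d → ℝ)).symm fun i => ε * (w i : ℝ)

open scoped Classical in
/-- The normalizing constant `κ_ε := ε^d · Σ_{z ∈ εℤ^d \ {0}, |z| ≤ 1} |z|^{-d}`. -/
noncomputable def kappa (d : ℕ) (ε : ℝ) : ℝ :=
  ε ^ d * ∑' w : Fin d → ℤ,
    (if w ≠ 0 ∧ ‖pt d ε w‖ ≤ 1 then (‖pt d ε w‖ ^ d)⁻¹ else 0)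

/-!
Fix a direction `z` with `0 < |εz| ≤ 1`. Starting from a point of `U` and moving in steps of `εz`,
one leaves `U` after `N ≤ (R + 1) / |εz|` steps, so telescoping along the steps and Cauchy–Schwarz
give the one-dimensional Poincaré inequality `|εz|² Σ h² ≤ (R + 1)² Σ_x (h(x + z) - h(x))²`.
Multiplying by `|εz|^{-(d+2)}` and summing over these `z` gives `ε^{-d} κ_ε Σ h²` on the left and
at most `(R + 1)²` times the double sum on the right, so `C = (R + 1)²` works. The double sum
converges because `|z|^{-(d+2)}` is summable over the lattice `ℤ^d`.
-/

open Function Finset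

lemma Function.HasFiniteSupport.summable_sq {α : Type*} {h : α → ℝ} (hh : h.HasFiniteSupport) :
    Summable fun x => h x ^ 2 :=
  (summable_of_hasFiniteSupport (hh.mul_left h)).congr fun x => (sq (h x)).symm

section ShiftPoincare

variable {G : Type*} [AddCommGroup G] {h : G → ℝ}

lemma Function.HasFiniteSupport.summable_sq_sub_comp_add (hh : h.HasFiniteSupport) (a b : G) :
    Summable fun x => (h (x + a) - h (x + b)) ^ 2 := by
  have ha := hh.fun_comp_of_injective (add_left_injective a)
  have hb := hh.fun_comp_of_injective (add_left_injective b)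
  refine summable_of_hasFiniteSupport ((Set.Finite.union ha hb).subset fun x hx => ?_)
  by_contra hc
  simp_all [Set.mem_union]

lemma sq_le_mul_sum_sq_sub_of_nsmul_eq_zero (w x : G) (N : ℕ) (hN : h (x + N • w) = 0) :
    h x ^ 2 ≤ N * ∑ k ∈ range N, (h (x + (k + 1) • w) - h (x + k • w)) ^ 2 := by
  have htel : ∑ k ∈ range N, (h (x + (k + 1) • w) - h (x + k • w)) = -h x := by
    rw [sum_range_sub (fun k => h (x + k • w)), hN]
    simp
  simpa [htel, neg_sq] using
    sq_sum_le_card_mul_sum_sq (s := range N) (f := fun k => h (x + (k + 1) • w) - h (x + k • w))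

theorem tsum_sq_le_of_nsmul_eq_zero (hh : h.HasFiniteSupport) (w : G) (N : ℕ)
    (hN : ∀ x, h x ≠ 0 → h (x + N • w) = 0) :
    ∑' x, h x ^ 2 ≤ N ^ 2 * ∑' x, (h (x + w) - h x) ^ 2 := by
  have hstep (k : ℕ) : Summable fun x => (h (x + (k + 1) • w) - h (x + k • w)) ^ 2 :=
    hh.summable_sq_sub_comp_add _ _
  have hshift (k : ℕ) : ∑' x, (h (x + (k + 1) • w) - h (x + k • w)) ^ 2 =
      ∑' x, (h (x + w) - h x) ^ 2 := by
    simp_rw [succ_nsmul, ← add_assoc]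
    exact (Equiv.addRight (k • w)).tsum_eq fun y => (h (y + w) - h y) ^ 2
  calc ∑' x, h x ^ 2
      ≤ ∑' x, N * ∑ k ∈ range N, (h (x + (k + 1) • w) - h (x + k • w)) ^ 2 := by
        refine Summable.tsum_le_tsum (fun x => ?_) ?_ ((summable_sum fun k _ => hstep k).mul_left _)
        · by_cases hx : h x = 0
          · rw [hx, sq, mul_zero]; positivity
          · exact sq_le_mul_sum_sq_sub_of_nsmul_eq_zero w x N (hN x hx)
        · exact hh.summable_sq
    _ = N ^ 2 * ∑' x, (h (x + w) - h x) ^ 2 := by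
        rw [tsum_mul_left, Summable.tsum_finsetSum fun k _ => hstep k]
        rw [sum_congr rfl fun k _ => hshift k, sum_const, card_range, nsmul_eq_mul]
        ring

theorem hasSum_kernel_mul_sq_sub (hh : h.HasFiniteSupport) {K : G → ℝ} (hK : Summable K)
    (hK0 : 0 ≤ K) :
    HasSum (fun z => K z * ∑' x, (h (x + z) - h x) ^ 2)
      (∑' q : G × G, K q.2 * (h (q.1 + q.2) - h q.1) ^ 2) := by
  have hx : Summable fun q : G × G => K q.2 * h q.1 ^ 2 :=
    (hh.summable_sq.mul_of_nonneg hK (fun _ => sq_nonneg _) hK0).congr fun _ => mul_comm _ _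
  let shear : G × G ≃ G × G :=
    ⟨fun q => (q.1 + q.2, q.2), fun q => (q.1 - q.2, q.2), fun q => by simp, fun q => by simp⟩
  have hxz : Summable fun q : G × G => K q.2 * h (q.1 + q.2) ^ 2 := shear.summable_iff.mpr hx
  have hF : Summable fun q : G × G => K q.2 * (h (q.1 + q.2) - h q.1) ^ 2 := by
    refine .of_nonneg_of_le (fun q => mul_nonneg (hK0 _) (sq_nonneg _)) (fun q => ?_)
      ((hxz.add hx).mul_left 2)
    have hsub := add_sq_le (a := h (q.1 + q.2)) (b := -h q.1)
    rw [neg_sq, ← sub_eq_add_neg] at hsub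
    calc _ ≤ K q.2 * (2 * (h (q.1 + q.2) ^ 2 + h q.1 ^ 2)) := by gcongr; exact hK0 _
      _ = _ := by ring
  rw [← (Equiv.prodComm G G).tsum_eq]
  refine ((Equiv.prodComm G G).summable_iff.mpr hF).hasSum.prod_fiberwise fun z => ?_
  simpa using (hh.summable_sq_sub_comp_add z 0).hasSum.mul_left (K z)

end ShiftPoincare

lemma exists_nat_mul_mem_Ioc {R b : ℝ} (hR : 0 ≤ R) (hb : 0 < b) :
    ∃ N : ℕ, R < N * b ∧ N * b ≤ R + b := by
  refine ⟨⌊R / b⌋₊ + 1, ?_, ?_⟩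
  · rw [← div_lt_iff₀ hb]
    exact_mod_cast Nat.lt_floor_add_one _
  · rw [Nat.cast_add_one, add_one_mul, add_le_add_iff_right, ← le_div_iff₀ hb]
    exact Nat.floor_le (by positivity)

theorem sq_norm_mul_tsum_sq_le_of_diam_le {G E : Type*} [AddCommGroup G] [NormedAddCommGroup E]
    [NormedSpace ℝ E] (φ : G →+ E) {U : Set E} (hU : Bornology.IsBounded U) {R : ℝ}
    (hdiam : Metric.diam U ≤ R) {h : G → ℝ} (hh : h.HasFiniteSupport)
    (hvan : ∀ x, φ x ∉ U → h x = 0) {w : G} (hw : 0 < ‖φ w‖) :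
    ‖φ w‖ ^ 2 * ∑' x, h x ^ 2 ≤ (R + ‖φ w‖) ^ 2 * ∑' x, (h (x + w) - h x) ^ 2 := by
  obtain ⟨N, hRN, hNR⟩ := exists_nat_mul_mem_Ioc (Metric.diam_nonneg.trans hdiam) hw
  have hN (x : G) (hx : h x ≠ 0) : h (x + N • w) = 0 := by
    refine hvan _ fun hxN => hRN.not_ge ?_
    calc N * ‖φ w‖ = dist (φ (x + N • w)) (φ x) := by
          rw [dist_eq_norm, map_add, add_sub_cancel_left, map_nsmul, RCLike.norm_nsmul ℝ,
            nsmul_eq_mul]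
      _ ≤ R :=
        (Metric.dist_le_diam_of_mem hU hxN (by_contra fun hxU => hx (hvan x hxU))).trans hdiam
  calc ‖φ w‖ ^ 2 * ∑' x, h x ^ 2
      ≤ ‖φ w‖ ^ 2 * (N ^ 2 * ∑' x, (h (x + w) - h x) ^ 2) := by
        gcongr; exact tsum_sq_le_of_nsmul_eq_zero hh w N hN
    _ = (N * ‖φ w‖) ^ 2 * ∑' x, (h (x + w) - h x) ^ 2 := by ring
    _ ≤ (R + ‖φ w‖) ^ 2 * ∑' x, (h (x + w) - h x) ^ 2 := by
        gcongr

section Lattice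

variable {d : ℕ}

lemma pt_apply (ε : ℝ) (w : Fin d → ℤ) (i : Fin d) : pt d ε w i = ε * w i := rfl

lemma pt_add (ε : ℝ) (a b : Fin d → ℤ) : pt d ε (a + b) = pt d ε a + pt d ε b := by
  ext i
  simp [pt_apply, mul_add]

variable (d) in
noncomputable def ptHom (ε : ℝ) : (Fin d → ℤ) →+ EuclideanSpace ℝ (Fin d) :=
  AddMonoidHom.mk' (pt d ε) (pt_add ε)

lemma pt_eq_smul (ε : ℝ) (w : Fin d → ℤ) : pt d ε w = ε • pt d 1 w := by
  ext i
  simp [pt_apply]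

lemma norm_pt {ε : ℝ} (hε : 0 ≤ ε) (w : Fin d → ℤ) : ‖pt d ε w‖ = ε * ‖pt d 1 w‖ := by
  rw [pt_eq_smul, norm_smul, Real.norm_of_nonneg hε]

lemma norm_le_norm_pt_one (w : Fin d → ℤ) : ‖w‖ ≤ ‖pt d 1 w‖ :=
  (pi_norm_le_iff_of_nonneg (norm_nonneg _)).mpr fun i => by
    simpa [pt_apply, Int.norm_eq_abs] using PiLp.norm_apply_le (pt d 1 w) i

lemma mul_norm_le_norm_pt {ε : ℝ} (hε : 0 ≤ ε) (w : Fin d → ℤ) : ε * ‖w‖ ≤ ‖pt d ε w‖ := by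
  rw [norm_pt hε]
  exact mul_le_mul_of_nonneg_left (norm_le_norm_pt_one w) hε

lemma norm_pt_pos {ε : ℝ} (hε : 0 < ε) {w : Fin d → ℤ} (hw : w ≠ 0) : 0 < ‖pt d ε w‖ :=
  (mul_pos hε (norm_pos_iff.mpr hw)).trans_le (mul_norm_le_norm_pt hε.le w)

lemma finite_setOf_norm_pt_le {ε : ℝ} (hε : 0 < ε) (r : ℝ) :
    {w : Fin d → ℤ | ‖pt d ε w‖ ≤ r}.Finite := by
  refine (isCompact_closedBall (0 : Fin d → ℤ) (r / ε)).finite_of_discrete.subset fun w hw => ?_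
  rw [mem_closedBall_zero_iff, le_div_iff₀' hε]
  exact (mul_norm_le_norm_pt hε.le w).trans hw

lemma summable_norm_pt_rpow {r : ℝ} (hr : r < -d) :
    Summable fun w : Fin d → ℤ => ‖pt d 1 w‖ ^ r := by
  let b := (EuclideanSpace.basisFun (Fin d) ℝ).toBasis
  let bℤ := b.restrictScalars ℤ
  have hrank : Module.finrank ℤ (Submodule.span ℤ (Set.range b)) = d := by
    simp [Module.finrank_eq_card_basis bℤ]
  have hL := ZLattice.summable_norm_rpow (Submodule.span ℤ (Set.range b)) r (by rwa [hrank])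
  refine (bℤ.equivFun.symm.summable_iff.mpr hL).congr fun w => ?_
  show ‖(bℤ.equivFun.symm w : EuclideanSpace ℝ (Fin d))‖ ^ r = _
  congr 2
  ext i
  rw [Module.Basis.equivFun_symm_apply, Submodule.coe_sum]
  simp only [Submodule.coe_smul, bℤ, Module.Basis.restrictScalars_apply]
  simp [b, pt, Pi.single_apply]

lemma hasFiniteSupport_of_forall_pt_notMem {ε : ℝ} (hε : 0 < ε)
    {U : Set (EuclideanSpace ℝ (Fin d))} (hU : Bornology.IsBounded U) {h : (Fin d → ℤ) → ℝ}
    (hvan : ∀ w, pt d ε w ∉ U → h w = 0) :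
    h.HasFiniteSupport := by
  obtain ⟨r, hr⟩ := hU.subset_closedBall 0
  refine (finite_setOf_norm_pt_le hε r).subset fun w hw => ?_
  by_contra hw'
  exact hw (hvan w fun hwU => hw' (mem_closedBall_zero_iff.mp (hr hwU)))

end Lattice

section Kernels

variable {d : ℕ} {ε : ℝ}

noncomputable def criticalKernel (d : ℕ) (ε : ℝ) (z : Fin d → ℤ) : ℝ :=
  if z ≠ 0 then (‖pt d ε z‖ ^ (d + 2))⁻¹ else 0

lemma criticalKernel_nonneg : 0 ≤ criticalKernel d ε := fun z => by
  unfold criticalKernel; split_ifs <;> positivity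

lemma summable_criticalKernel (hε : 0 < ε) : Summable (criticalKernel d ε) := by
  refine ((summable_norm_pt_rpow (d := d) (r := -(d + 2 : ℝ)) (by linarith)).mul_left
    (ε ^ (d + 2))⁻¹).congr fun z => ?_
  unfold criticalKernel
  split_ifs with hz
  · rw [norm_pt hε.le, mul_pow, mul_inv, Real.rpow_neg (norm_nonneg _)]
    norm_cast
  · -- both sides vanish at `z = 0`, the right one through the junk value `0 ^ r = 0` (`r ≠ 0`)
    obtain rfl := not_not.mp hz
    rw [show pt d 1 0 = 0 from map_zero (ptHom d 1), norm_zero,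
      Real.zero_rpow (neg_ne_zero.mpr (by positivity)), mul_zero]

noncomputable def kappaTerm (d : ℕ) (ε : ℝ) (w : Fin d → ℤ) : ℝ :=
  if w ≠ 0 ∧ ‖pt d ε w‖ ≤ 1 then (‖pt d ε w‖ ^ d)⁻¹ else 0

lemma kappa_eq_mul_tsum_kappaTerm : kappa d ε = ε ^ d * ∑' w, kappaTerm d ε w := rfl

lemma kappaTerm_nonneg : 0 ≤ kappaTerm d ε := fun w => by
  unfold kappaTerm; split_ifs <;> positivity

lemma summable_kappaTerm (hε : 0 < ε) : Summable (kappaTerm d ε) :=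
  summable_of_hasFiniteSupport <| (finite_setOf_norm_pt_le hε 1).subset fun w hw => by
    unfold kappaTerm at hw
    by_contra hw'
    exact hw (if_neg fun hc => hw' hc.2)

lemma one_le_kappa (hd : 1 ≤ d) (hε0 : 0 < ε) (hε1 : ε ≤ 1) : 1 ≤ kappa d ε := by
  let e : Fin d → ℤ := Pi.single ⟨0, hd⟩ 1
  have he : ‖pt d ε e‖ = ε := by
    have : pt d ε e = PiLp.single 2 (β := fun _ => ℝ) ⟨0, hd⟩ ε := by
      ext i
      simp [pt_apply, e, Pi.single_apply]
    rw [this, PiLp.norm_single, Real.norm_of_nonneg hε0.le]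
  have hterm : kappaTerm d ε e = (ε ^ d)⁻¹ := by
    rw [kappaTerm, if_pos ⟨by simp [e], he.le.trans hε1⟩, he]
  rw [kappa_eq_mul_tsum_kappaTerm, ← mul_inv_cancel₀ (pow_pos hε0 d).ne', ← hterm]
  gcongr
  exact (summable_kappaTerm hε0).le_tsum e fun w _ => kappaTerm_nonneg w

lemma kappaTerm_mul_tsum_sq_le (hε : 0 < ε) {U : Set (EuclideanSpace ℝ (Fin d))}
    (hU : Bornology.IsBounded U) {R : ℝ} (hdiam : Metric.diam U ≤ R) {h : (Fin d → ℤ) → ℝ}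
    (hh : h.HasFiniteSupport) (hvan : ∀ w, pt d ε w ∉ U → h w = 0) (z : Fin d → ℤ) :
    kappaTerm d ε z * ∑' x, h x ^ 2 ≤
      (R + 1) ^ 2 * (criticalKernel d ε z * ∑' x, (h (x + z) - h x) ^ 2) := by
  have hD : 0 ≤ ∑' x, (h (x + z) - h x) ^ 2 := tsum_nonneg fun _ => sq_nonneg _
  by_cases hz : z ≠ 0 ∧ ‖pt d ε z‖ ≤ 1
  swap
  · rw [kappaTerm, if_neg hz, zero_mul]
    exact mul_nonneg (sq_nonneg _) (mul_nonneg (criticalKernel_nonneg z) hD)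
  obtain ⟨hz0, hz1⟩ := hz
  have hb := norm_pt_pos hε hz0
  have hR : 0 ≤ R := Metric.diam_nonneg.trans hdiam
  have hpoinc := sq_norm_mul_tsum_sq_le_of_diam_le (ptHom d ε) hU hdiam hh hvan hb
  rw [kappaTerm, if_pos ⟨hz0, hz1⟩, criticalKernel, if_pos hz0]
  calc (‖pt d ε z‖ ^ d)⁻¹ * ∑' x, h x ^ 2
      = (‖pt d ε z‖ ^ (d + 2))⁻¹ * (‖pt d ε z‖ ^ 2 * ∑' x, h x ^ 2) := by
        field_simp; ring
    _ ≤ (‖pt d ε z‖ ^ (d + 2))⁻¹ * ((R + ‖pt d ε z‖) ^ 2 * ∑' x, (h (x + z) - h x) ^ 2) :=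
        mul_le_mul_of_nonneg_left hpoinc (by positivity)
    _ ≤ (‖pt d ε z‖ ^ (d + 2))⁻¹ * ((R + 1) ^ 2 * ∑' x, (h (x + z) - h x) ^ 2) := by
        gcongr
    _ = _ := by ring

end Kernels

open scoped Classical in
theorem poincare_critical_general (d : ℕ) (hd : 1 ≤ d) (R : ℝ) :
    ∃ C : ℝ, ∀ U : Set (EuclideanSpace ℝ (Fin d)),
      IsOpen U → Bornology.IsBounded U → Metric.diam U ≤ R →
      ∀ ε : ℝ, 0 < ε → ε < 1 →
      ∀ h : (Fin d → ℤ) → ℝ, (∀ w, pt d ε w ∉ U → h w = 0) →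
      ε ^ d * ∑' w : Fin d → ℤ, (h w) ^ 2 ≤
        C * (ε ^ (2 * d) / kappa d ε) *
          ∑' q : (Fin d → ℤ) × (Fin d → ℤ),
            (if q.2 ≠ 0 then
              (‖pt d ε q.2‖ ^ (d + 2))⁻¹ * (h (q.1 + q.2) - h q.1) ^ 2 else 0) := by
  refine ⟨(R + 1) ^ 2, fun U _ hU hdiam ε hε0 hε1 h hvan => ?_⟩
  have hh := hasFiniteSupport_of_forall_pt_notMem hε0 hU hvan
  have hK := hasSum_kernel_mul_sq_sub hh (summable_criticalKernel hε0) criticalKernel_nonneg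
  have hdouble : (∑' q : (Fin d → ℤ) × (Fin d → ℤ), if q.2 ≠ 0 then
      (‖pt d ε q.2‖ ^ (d + 2))⁻¹ * (h (q.1 + q.2) - h q.1) ^ 2 else 0) =
      ∑' z, criticalKernel d ε z * ∑' x, (h (x + z) - h x) ^ 2 := by
    rw [hK.tsum_eq]
    exact tsum_congr fun q => by rw [criticalKernel, ite_mul, zero_mul]
  have hmain : (∑' z, kappaTerm d ε z) * ∑' x, h x ^ 2 ≤
      (R + 1) ^ 2 * ∑' z, criticalKernel d ε z * ∑' x, (h (x + z) - h x) ^ 2 := by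
    rw [← tsum_mul_right, ← tsum_mul_left]
    exact ((summable_kappaTerm hε0).mul_right _).tsum_le_tsum
      (kappaTerm_mul_tsum_sq_le hε0 hU hdiam hh hvan) (hK.summable.mul_left _)
  have hκ : kappa d ε = ε ^ d * ∑' z, kappaTerm d ε z := kappa_eq_mul_tsum_kappaTerm
  have hκpos : 0 < kappa d ε := one_pos.trans_le (one_le_kappa hd hε0 hε1.le)
  have hS : 0 < ∑' z, kappaTerm d ε z := pos_of_mul_pos_right (hκ ▸ hκpos) (by positivity)
  rw [hdouble]
  calc ε ^ d * ∑' x, h x ^ 2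
      = ε ^ (2 * d) / kappa d ε * ((∑' z, kappaTerm d ε z) * ∑' x, h x ^ 2) := by
        rw [hκ]; field_simp; ring
    _ ≤ ε ^ (2 * d) / kappa d ε *
        ((R + 1) ^ 2 * ∑' z, criticalKernel d ε z * ∑' x, (h (x + z) - h x) ^ 2) :=
        mul_le_mul_of_nonneg_left hmain (div_nonneg (by positivity) hκpos.le)
    _ = _ := by ring

open scoped Classical in
/-- Poincaré inequality for the critical kernel: for `d ≥ 1` and `R > 0`
there is `C = C(d, R)` such that for every bounded open `U ⊂ ℝ^d` with `diam U ≤ R`,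
every `ε ∈ (0,1)`, and every `h : εℤ^d → ℝ` vanishing on `εℤ^d \ U`,
`ε^d Σ_x h(x)² ≤ C (ε^{2d}/κ_ε) Σ_x Σ_{z ≠ 0} |z|^{-(d+2)} (h(x+z) − h(x))²`.
Lattice points are indexed by `w ∈ ℤ^d`, the actual point being `pt d ε w = ε·w`. -/
theorem poincare_critical (d : ℕ) (hd : 1 ≤ d) (R : ℝ) (hR : 0 < R) :
    ∃ C : ℝ, ∀ U : Set (EuclideanSpace ℝ (Fin d)),
      IsOpen U → Bornology.IsBounded U → Metric.diam U ≤ R →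
      ∀ ε : ℝ, 0 < ε → ε < 1 →
      ∀ h : (Fin d → ℤ) → ℝ, (∀ w, pt d ε w ∉ U → h w = 0) →
      ε ^ d * ∑' w : Fin d → ℤ, (h w) ^ 2 ≤
        C * (ε ^ (2 * d) / kappa d ε) *
          ∑' q : (Fin d → ℤ) × (Fin d → ℤ),
            (if q.2 ≠ 0 then
              (‖pt d ε q.2‖ ^ (d + 2))⁻¹ * (h (q.1 + q.2) - h q.1) ^ 2 else 0) :=
  poincare_critical_general d hd R
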